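/- arXiv:2504.20210 — 2 statements merged into one kernel-verified Lean document; each statement's English description precedes it below -/
import Mathlib

section
/- Let F be a group and N ⊴ F. Suppose the relation module N/[N,N], viewed as a ℤ[F/N]-module via conjugation, is isomorphic to a direct sum ⊕_{r ∈ R} ℤ[(F/N)/⟨r̄⟩] of permutation modules indexed by a set R. Then N/[F,N] is a free abelian group of rank |R|. -/
open scoped DirectSum

/-- The type synonym `ρ.asModule` of an additive-group representation is itself
an additive group. -/
noncomputable instance repAsModuleAddCommGroup {k G V : Type*} [CommRing k] [Monoid G]
    [AddCommGroup V] [Module k V] (ρ : Representation k G V) :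
    AddCommGroup ρ.asModule :=
  inferInstanceAs (AddCommGroup V)

/-- The permutation module `ℤ[G/H]` as a module over the group ring `ℤ[G]`. -/
noncomputable def PermMod (G : Type*) [Group G] (H : Subgroup G) : Type _ :=
  (Representation.ofMulAction ℤ G (G ⧸ H)).asModule

noncomputable instance (G : Type*) [Group G] (H : Subgroup G) :
    AddCommGroup (PermMod G H) :=
  inferInstanceAs (AddCommGroup ((Representation.ofMulAction ℤ G (G ⧸ H)).asModule))

noncomputable instance (G : Type*) [Group G] (H : Subgroup G) :
    Module (MonoidAlgebra ℤ G) (PermMod G H) :=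
  inferInstanceAs (Module (MonoidAlgebra ℤ G)
    ((Representation.ofMulAction ℤ G (G ⧸ H)).asModule))

/-! The quotient `N/[F,N]` is the module of `F/N`-coinvariants of the relation module
`N/[N,N]`: under conjugation, `f̄ • n̄ - n̄` is the class of the commutator `⁅f, n⁆`.
Coinvariants are invariant under isomorphism of `ℤ[G]`-modules, and the coinvariants of a
permutation module `ℤ[G/H]` are `ℤ`, via the augmentation, because every coset `gH` is the
translate `g • H` of the trivial one. Hence `N/[F,N] ≅ ⊕_R ℤ`. -/

open scoped commutatorElement

section Coinvariants

variable (k G : Type*) [CommRing k] [Monoid G]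

def coinvariantsKer (M : Type*) [AddCommGroup M] [Module (MonoidAlgebra k G) M] :
    AddSubgroup M :=
  AddSubgroup.closure {x | ∃ (g : G) (m : M), MonoidAlgebra.of k G g • m - m = x}

variable {k G} {M M' : Type*} [AddCommGroup M] [Module (MonoidAlgebra k G) M]
  [AddCommGroup M'] [Module (MonoidAlgebra k G) M']

theorem of_smul_sub_mem_coinvariantsKer (g : G) (m : M) :
    MonoidAlgebra.of k G g • m - m ∈ coinvariantsKer k G M :=
  AddSubgroup.subset_closure ⟨g, m, rfl⟩

theorem coinvariantsKer_mk_of_smul (g : G) (m : M) :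
    (QuotientAddGroup.mk (MonoidAlgebra.of k G g • m) : M ⧸ coinvariantsKer k G M) = m :=
  QuotientAddGroup.eq_iff_sub_mem.mpr (of_smul_sub_mem_coinvariantsKer g m)

theorem coinvariantsKer_le_ker {A : Type*} [AddGroup A] (f : M →+ A)
    (hf : ∀ (g : G) (m : M), f (MonoidAlgebra.of k G g • m) = f m) :
    coinvariantsKer k G M ≤ f.ker := by
  rw [coinvariantsKer, AddSubgroup.closure_le]
  rintro _ ⟨g, m, rfl⟩
  rw [SetLike.mem_coe, AddMonoidHom.mem_ker, map_sub, hf, sub_self]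

theorem map_coinvariantsKer (e : M ≃ₗ[MonoidAlgebra k G] M') :
    (coinvariantsKer k G M).map e.toAddMonoidHom = coinvariantsKer k G M' := by
  rw [coinvariantsKer, coinvariantsKer, AddMonoidHom.map_closure]
  congr 1
  ext x
  constructor
  · rintro ⟨_, ⟨g, m, rfl⟩, rfl⟩
    exact ⟨g, e m, by simp⟩
  · rintro ⟨g, m, rfl⟩
    exact ⟨_, ⟨g, e.symm m, rfl⟩, by simp⟩

noncomputable def coinvariantsCongr (e : M ≃ₗ[MonoidAlgebra k G] M') :
    M ⧸ coinvariantsKer k G M ≃+ M' ⧸ coinvariantsKer k G M' :=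
  QuotientAddGroup.congr _ _ e.toAddEquiv (map_coinvariantsKer e)

end Coinvariants

section PermutationModule

variable {G : Type*} [Group G]

-- `PermMod G H` is `MonoidAlgebra ℤ (G ⧸ H)` by definition; going through this equivalence
-- keeps the rewriting below type-correct.
noncomputable def PermMod.coeffEquiv (H : Subgroup G) : PermMod G H ≃+ MonoidAlgebra ℤ (G ⧸ H) :=
  AddEquiv.refl _

theorem PermMod.of_smul_coeffEquiv_symm_single {H : Subgroup G} (g : G) (x : G ⧸ H) (c : ℤ) :
    MonoidAlgebra.of ℤ G g • (PermMod.coeffEquiv H).symm (MonoidAlgebra.single x c) =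
      (PermMod.coeffEquiv H).symm (MonoidAlgebra.single (g • x) c) :=
  (Representation.single_smul (Representation.ofMulAction ℤ G (G ⧸ H)) 1 g
    (MonoidAlgebra.single x c)).trans <|
      (one_smul ℤ _).trans (Representation.ofMulAction_single g x c)

variable {R : Type*} [DecidableEq R] (H : R → Subgroup G)

noncomputable def permSingle (i : R) (x : G ⧸ H i) (c : ℤ) : ⨁ i, PermMod G (H i) :=
  DirectSum.lof (MonoidAlgebra ℤ G) R (fun i => PermMod G (H i)) i
    ((PermMod.coeffEquiv (H i)).symm (MonoidAlgebra.single x c))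

theorem of_smul_permSingle (g : G) (i : R) (x : G ⧸ H i) (c : ℤ) :
    MonoidAlgebra.of ℤ G g • permSingle H i x c = permSingle H i (g • x) c := by
  rw [permSingle, permSingle, ← map_smul, PermMod.of_smul_coeffEquiv_symm_single]

theorem permSingle_eq_of_smul (g : G) (i : R) (c : ℤ) :
    permSingle H i g c = MonoidAlgebra.of ℤ G g • permSingle H i (1 : G) c := by
  rw [of_smul_permSingle, MulAction.Quotient.smul_mk, smul_eq_mul, mul_one]

theorem permMod_addHom_ext {A : Type*} [AddZeroClass A] {f f' : (⨁ i, PermMod G (H i)) →+ A}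
    (h : ∀ i x c, f (permSingle H i x c) = f' (permSingle H i x c)) : f = f' := by
  refine DirectSum.addHom_ext fun i m => ?_
  obtain ⟨m, rfl⟩ := (PermMod.coeffEquiv (H i)).symm.surjective m
  let ι := (DirectSum.of (fun i => PermMod G (H i)) i).comp
    (PermMod.coeffEquiv (H i)).symm.toAddMonoidHom
  exact DFunLike.congr_fun
    (MonoidAlgebra.addMonoidHom_ext (f := f.comp ι) (g := f'.comp ι) fun x c => h i x c) m

noncomputable def permAugmentation : (⨁ i, PermMod G (H i)) →+ (R →₀ ℤ) :=
  DirectSum.toAddMonoid fun i => (Finsupp.singleAddHom i).comp <|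
    (MonoidAlgebra.liftNC (AddMonoidHom.id ℤ) 1).comp (PermMod.coeffEquiv (H i)).toAddMonoidHom

theorem permAugmentation_permSingle (i : R) (x : G ⧸ H i) (c : ℤ) :
    permAugmentation H (permSingle H i x c) = Finsupp.single i c := by
  rw [permAugmentation, permSingle, DirectSum.lof_eq_of, DirectSum.toAddMonoid_of]
  simp

theorem permAugmentation_of_smul (g : G) (m : ⨁ i, PermMod G (H i)) :
    permAugmentation H (MonoidAlgebra.of ℤ G g • m) = permAugmentation H m := by
  have h : (permAugmentation H).comp (DistribSMul.toAddMonoidHom _ (MonoidAlgebra.of ℤ G g)) =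
      permAugmentation H :=
    permMod_addHom_ext H fun i x c => by
      rw [AddMonoidHom.comp_apply, DistribSMul.toAddMonoidHom_apply, of_smul_permSingle,
        permAugmentation_permSingle, permAugmentation_permSingle]
  exact DFunLike.congr_fun h m

noncomputable def permSection : (R →₀ ℤ) →+ ⨁ i, PermMod G (H i) :=
  Finsupp.liftAddHom fun i =>
    { toFun := permSingle H i (1 : G)
      map_zero' := by simp [permSingle]
      map_add' := by simp [permSingle] }

theorem permSection_single (i : R) (c : ℤ) :
    permSection H (Finsupp.single i c) = permSingle H i (1 : G) c :=
  Finsupp.liftAddHom_apply_single _ _ _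

theorem permAugmentation_comp_permSection :
    (permAugmentation H).comp (permSection H) = AddMonoidHom.id _ :=
  Finsupp.addHom_ext fun i c => by
    rw [AddMonoidHom.comp_apply, permSection_single, permAugmentation_permSingle,
      AddMonoidHom.id_apply]

theorem mk_comp_permSection_comp_permAugmentation :
    (QuotientAddGroup.mk' (coinvariantsKer ℤ G _)).comp
      ((permSection H).comp (permAugmentation H)) = QuotientAddGroup.mk' _ :=
  permMod_addHom_ext H fun i x c => by
    obtain ⟨g, rfl⟩ := QuotientGroup.mk_surjective x
    rw [AddMonoidHom.comp_apply, AddMonoidHom.comp_apply, permAugmentation_permSingle,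
      permSection_single, QuotientAddGroup.mk'_apply, QuotientAddGroup.mk'_apply,
      permSingle_eq_of_smul H g, coinvariantsKer_mk_of_smul]

noncomputable def permCoinvariantsEquiv :
    (⨁ i, PermMod G (H i)) ⧸ coinvariantsKer ℤ G (⨁ i, PermMod G (H i)) ≃+ (R →₀ ℤ) :=
  AddMonoidHom.toAddEquiv
    (QuotientAddGroup.lift _ (permAugmentation H)
      (coinvariantsKer_le_ker _ (permAugmentation_of_smul H)))
    ((QuotientAddGroup.mk' _).comp (permSection H))
    (QuotientAddGroup.addMonoidHom_ext _ <| by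
      rw [AddMonoidHom.comp_assoc, QuotientAddGroup.lift_comp_mk', AddMonoidHom.comp_assoc,
        mk_comp_permSection_comp_permAugmentation, AddMonoidHom.id_comp])
    (by rw [← AddMonoidHom.comp_assoc, QuotientAddGroup.lift_comp_mk',
      permAugmentation_comp_permSection])

end PermutationModule

theorem Subgroup.commutator_le_commutator_top_subgroupOf {G : Type*} [Group G]
    (H : Subgroup G) : _root_.commutator H ≤ ⁅(⊤ : Subgroup G), H⁆.subgroupOf H := by
  rw [_root_.commutator, Subgroup.subgroupOf, ← Subgroup.map_le_iff_le_comap,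
    Subgroup.map_commutator, ← MonoidHom.range_eq_map, Subgroup.range_subtype]
  exact Subgroup.commutator_mono le_top le_rfl

section RelationModule

variable {F : Type*} [Group F] {N : Subgroup F} [N.Normal]

def IsConjugationAction (ρ : Representation ℤ (F ⧸ N) (Additive (Abelianization N))) : Prop :=
  ∀ (g : F) (n : N), ρ (QuotientGroup.mk g) (Additive.ofMul (Abelianization.of n)) =
    Additive.ofMul (Abelianization.of
      (⟨g * (n : F) * g⁻¹, (inferInstance : N.Normal).conj_mem (n : F) n.2 g⟩ : N))

variable (ρ : Representation ℤ (F ⧸ N) (Additive (Abelianization N)))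

noncomputable def relationModuleMk : Additive N →+ ρ.asModule :=
  ρ.asModuleEquiv.symm.toLinearMap.toAddMonoidHom.comp (MonoidHom.toAdditive Abelianization.of)

theorem relationModuleMk_surjective : Function.Surjective (relationModuleMk ρ) :=
  ρ.asModuleEquiv.symm.surjective.comp fun x => QuotientGroup.mk_surjective x

variable {ρ}

theorem of_smul_relationModuleMk_sub (hρ : IsConjugationAction ρ) (f : F) (n c : N)
    (hc : (c : F) = ⁅f, (n : F)⁆) :
    MonoidAlgebra.of ℤ (F ⧸ N) (f : F ⧸ N) • relationModuleMk ρ (.ofMul n) -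
      relationModuleMk ρ (.ofMul n) = relationModuleMk ρ (.ofMul c) := by
  rw [sub_eq_iff_eq_add, ← map_add, ← ofMul_mul]
  change _ • ρ.asModuleEquiv.symm _ = ρ.asModuleEquiv.symm _
  rw [← Representation.asModuleEquiv_symm_map_rho, MonoidHom.toAdditive_apply_apply, toMul_ofMul,
    hρ, MonoidHom.toAdditive_apply_apply, toMul_ofMul]
  congr 3
  ext
  simp [hc, commutatorElement_def]

theorem commutatorElement_mem_of_mem (f : F) {x : F} (hx : x ∈ N) : ⁅f, x⁆ ∈ N :=
  Subgroup.commutator_le_right ⊤ N (Subgroup.commutator_mem_commutator (Subgroup.mem_top f) hx)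

variable (ρ) in
noncomputable def toCoinvariants :
    N →* Multiplicative (ρ.asModule ⧸ coinvariantsKer ℤ (F ⧸ N) ρ.asModule) :=
  AddMonoidHom.toMultiplicativeRight ((QuotientAddGroup.mk' _).comp (relationModuleMk ρ))

theorem mem_ker_toCoinvariants {n : N} :
    n ∈ (toCoinvariants ρ).ker ↔
      relationModuleMk ρ (.ofMul n) ∈ coinvariantsKer ℤ (F ⧸ N) ρ.asModule :=
  QuotientAddGroup.eq_zero_iff _

theorem toCoinvariants_surjective : Function.Surjective (toCoinvariants ρ) :=
  (QuotientAddGroup.mk'_surjective _).comp (relationModuleMk_surjective ρ)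

theorem commutator_subgroupOf_le_ker_toCoinvariants (hρ : IsConjugationAction ρ) :
    ⁅(⊤ : Subgroup F), N⁆.subgroupOf N ≤ (toCoinvariants ρ).ker := by
  rw [Subgroup.subgroupOf, ← Subgroup.comap_map_eq_self_of_injective N.subtype_injective
    (toCoinvariants ρ).ker]
  refine Subgroup.comap_mono (Subgroup.commutator_le.mpr fun f _ x hx => ?_)
  refine ⟨⟨⁅f, x⁆, commutatorElement_mem_of_mem f hx⟩, mem_ker_toCoinvariants.mpr ?_, rfl⟩
  rw [← of_smul_relationModuleMk_sub hρ f ⟨x, hx⟩ _ rfl]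
  exact of_smul_sub_mem_coinvariantsKer _ _

theorem ker_toCoinvariants_le_commutator_subgroupOf (hρ : IsConjugationAction ρ) :
    (toCoinvariants ρ).ker ≤ ⁅(⊤ : Subgroup F), N⁆.subgroupOf N := by
  set J := ⁅(⊤ : Subgroup F), N⁆.subgroupOf N
  let π : Abelianization N →* N ⧸ J :=
    QuotientGroup.map _ J (MonoidHom.id N) (Subgroup.commutator_le_commutator_top_subgroupOf N)
  -- `θ` kills `coinvariantsKer` because `f̄ • n̄ - n̄` is the class of `⁅f, n⁆ ∈ J`.
  let θ : ρ.asModule →+ Additive (N ⧸ J) :=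
    (MonoidHom.toAdditive π).comp ρ.asModuleEquiv.toLinearMap.toAddMonoidHom
  have hθ (n : N) : θ (relationModuleMk ρ (.ofMul n)) = .ofMul (n : N ⧸ J) := rfl
  have hθ_invariant : coinvariantsKer ℤ (F ⧸ N) ρ.asModule ≤ θ.ker := by
    refine coinvariantsKer_le_ker θ fun g m => ?_
    obtain ⟨f, rfl⟩ := QuotientGroup.mk_surjective g
    obtain ⟨n, rfl⟩ := relationModuleMk_surjective ρ m
    obtain ⟨n, rfl⟩ := Additive.ofMul.surjective n
    rw [← sub_eq_zero, ← map_sub, of_smul_relationModuleMk_sub hρ f n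
      ⟨⁅f, (n : F)⁆, commutatorElement_mem_of_mem f n.2⟩ rfl, hθ, ofMul_eq_zero,
      QuotientGroup.eq_one_iff]
    exact Subgroup.mem_subgroupOf.mpr
      (Subgroup.commutator_mem_commutator (Subgroup.mem_top f) n.2)
  intro n hn
  have := hθ_invariant (mem_ker_toCoinvariants.mp hn)
  rwa [AddMonoidHom.mem_ker, hθ, ofMul_eq_zero, QuotientGroup.eq_one_iff] at this

theorem ker_toCoinvariants (hρ : IsConjugationAction ρ) :
    (toCoinvariants ρ).ker = ⁅(⊤ : Subgroup F), N⁆.subgroupOf N :=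
  le_antisymm (ker_toCoinvariants_le_commutator_subgroupOf hρ)
    (commutator_subgroupOf_le_ker_toCoinvariants hρ)

noncomputable def quotientCommutatorEquivCoinvariants (hρ : IsConjugationAction ρ) :
    N ⧸ ⁅(⊤ : Subgroup F), N⁆.subgroupOf N ≃*
      Multiplicative (ρ.asModule ⧸ coinvariantsKer ℤ (F ⧸ N) ρ.asModule) :=
  (QuotientGroup.quotientMulEquivOfEq (ker_toCoinvariants hρ).symm).trans
    (QuotientGroup.quotientKerEquivOfSurjective _ toCoinvariants_surjective)

end RelationModule

theorem stmt8_general {F : Type*} [Group F] (N : Subgroup F) [N.Normal]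
    {R : Type*} (r : R → F)
    (ρ : Representation ℤ (F ⧸ N) (Additive (Abelianization N)))
    (hρ : ∀ (g : F) (n : N),
      ρ (QuotientGroup.mk g) (Additive.ofMul (Abelianization.of n)) =
        Additive.ofMul (Abelianization.of
          (⟨g * (n : F) * g⁻¹,
            (inferInstance : N.Normal).conj_mem (n : F) n.2 g⟩ : N)))
    (hiso : Nonempty (ρ.asModule ≃ₗ[MonoidAlgebra ℤ (F ⧸ N)]
      (⨁ i : R, PermMod (F ⧸ N)
        (Subgroup.zpowers (QuotientGroup.mk (r i) : F ⧸ N))))) :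
    Nonempty ((N ⧸ ((⁅(⊤ : Subgroup F), N⁆).subgroupOf N)) ≃*
      Multiplicative (R →₀ ℤ)) := by
  classical
  obtain ⟨e⟩ := hiso
  exact ⟨(quotientCommutatorEquivCoinvariants hρ).trans <|
    AddEquiv.toMultiplicative ((coinvariantsCongr e).trans (permCoinvariantsEquiv _))⟩

/-- If the relation module `N/[N,N]`, viewed as a `ℤ[F/N]`-module via
conjugation (encoded by a representation `ρ` of `G = F/N` on the abelianization
of `N` satisfying `ρ(ḡ)(n[N,N]) = (g n g⁻¹)[N,N]`), is isomorphic to a direct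
sum `⊕_{i ∈ R} ℤ[G/⟨r̄ᵢ⟩]` of permutation modules, then `N/[F,N]` is free
abelian of rank `|R|` (i.e. isomorphic to the free abelian group `R →₀ ℤ`). -/
theorem stmt8 {F : Type*} [Group F] (N : Subgroup F) [N.Normal]
    {R : Type*} (r : R → F) (hrN : ∀ i, r i ∈ N)
    (ρ : Representation ℤ (F ⧸ N) (Additive (Abelianization N)))
    (hρ : ∀ (g : F) (n : N),
      ρ (QuotientGroup.mk g) (Additive.ofMul (Abelianization.of n)) =
        Additive.ofMul (Abelianization.of
          (⟨g * (n : F) * g⁻¹,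
            (inferInstance : N.Normal).conj_mem (n : F) n.2 g⟩ : N)))
    (hiso : Nonempty (ρ.asModule ≃ₗ[MonoidAlgebra ℤ (F ⧸ N)]
      (⨁ i : R, PermMod (F ⧸ N)
        (Subgroup.zpowers (QuotientGroup.mk (r i) : F ⧸ N))))) :
    Nonempty ((N ⧸ ((⁅(⊤ : Subgroup F), N⁆).subgroupOf N)) ≃*
      Multiplicative (R →₀ ℤ)) :=
  stmt8_general N r ρ hρ hiso
end

section
/- Let F be a free group and N a normal subgroup such that F/N is torsion-free and N/[F,N] is free abelian. Then F/[F,N] is torsion-free. -/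
/-- A monoid is torsion-free if no nontrivial element has finite order (Mathlib definition of Dec 2024, since removed). -/
def Monoid.IsTorsionFree (G : Type*) [Monoid G] : Prop :=
  ∀ g : G, g ≠ 1 → ¬IsOfFinOrder g

/-!
Torsion-freeness is preserved under extensions: an element of finite order in `F/[F,N]` maps to an
element of finite order, hence to `1`, in `F/N`, so it comes from `N/[F,N]`, which embeds into
`F/[F,N]` and is torsion-free.
-/

namespace Monoid.IsTorsionFree

theorem of_isMulTorsionFree (G : Type*) [Monoid G] [IsMulTorsionFree G] : IsTorsionFree G :=
  fun _ => not_isOfFinOrder_of_isMulTorsionFree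

theorem of_injective {G H : Type*} [Monoid G] [Monoid H] (hH : IsTorsionFree H) {f : G →* H}
    (hf : Function.Injective f) : IsTorsionFree G := fun g hg hfin =>
  hH (f g) (by rwa [← map_one f, hf.ne_iff]) (hf.isOfFinOrder_iff.mpr hfin)

theorem of_ker_le_range {H G Q : Type*} [Group H] [Group G] [Group Q] (hH : IsTorsionFree H)
    (hQ : IsTorsionFree Q) {i : H →* G} (hi : Function.Injective i) {p : G →* Q}
    (hexact : p.ker ≤ i.range) : IsTorsionFree G := by
  intro g hg hfin
  have hpg : p g = 1 := by
    by_contra hpg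
    exact hQ _ hpg (p.isOfFinOrder hfin)
  obtain ⟨h, rfl⟩ := hexact hpg
  exact hH h (fun h1 => hg (by rw [h1, map_one])) (hi.isOfFinOrder_iff.mp hfin)

theorem quotient_of_le {G : Type*} [Group G] {K N : Subgroup G} [K.Normal] [N.Normal]
    (hKN : K ≤ N) (hN : IsTorsionFree (G ⧸ N)) (hNK : IsTorsionFree (N ⧸ K.subgroupOf N)) :
    IsTorsionFree (G ⧸ K) := by
  let i : N ⧸ K.subgroupOf N →* G ⧸ K := QuotientGroup.map _ K N.subtype fun _ hn => hn
  let p : G ⧸ K →* G ⧸ N := QuotientGroup.map K N (MonoidHom.id G) hKN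
  refine of_ker_le_range hNK hN (i := i) (p := p) ?_ ?_
  · rw [injective_iff_map_eq_one]
    rintro ⟨n⟩ hn
    exact (QuotientGroup.eq_one_iff _).mpr ((QuotientGroup.eq_one_iff (n : G)).mp hn)
  · rintro ⟨g⟩ hg
    exact ⟨QuotientGroup.mk ⟨g, (QuotientGroup.eq_one_iff g).mp hg⟩, rfl⟩

end Monoid.IsTorsionFree

/-- For a free group `F` and `N ⊴ F` with `F/N` torsion-free and `N/[F,N]`
free abelian, the group `F/[F,N]` is torsion-free. -/
theorem stmt16 {α : Type*} (N : Subgroup (FreeGroup α)) [N.Normal]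
    (hQtf : Monoid.IsTorsionFree (FreeGroup α ⧸ N))
    (β : Type*)
    (e : (N ⧸ ((⁅(⊤ : Subgroup (FreeGroup α)), N⁆).subgroupOf N)) ≃*
      Multiplicative (β →₀ ℤ)) :
    Monoid.IsTorsionFree (FreeGroup α ⧸ ⁅(⊤ : Subgroup (FreeGroup α)), N⁆) :=
  Monoid.IsTorsionFree.quotient_of_le (Subgroup.commutator_le_right ⊤ N) hQtf
    ((Monoid.IsTorsionFree.of_isMulTorsionFree _).of_injective (f := e.toMonoidHom) e.injective)
end
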